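/- If a chain of domino tiles is blocked with both ends equal to k, then the total pip sum of the tiles in the chain is at least 6k + 42. -/

import Mathlib

/-!
Blocking both ends at `k` forces all seven tiles `[k,j]` into the chain, so `k` occurs at least
eight times among the entries `a₁,b₁,…,aₙ,bₙ` (the double `[k,k]` counts twice) and every other
value occurs at least once. Apart from `a₁` and `bₙ`, the entries are the junctions
`bᵢ = aᵢ₊₁`, each taken twice, so a value other than the ends occurs an even number of times,
hence at least twice. The pip sum is therefore at least `8k + 2(21 - k) = 6k + 42`.
-/

/-- A domino tile is an unordered pair of values in `{0,…,6}`. -/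
abbrev Tile := Sym2 (Fin 7)

/-- The pip sum of the tile `[a,b]` is `a + b`. -/
def pips (t : Tile) : ℕ :=
  Sym2.lift ⟨fun (a b : Fin 7) => (a : ℕ) + (b : ℕ), fun a b => Nat.add_comm a b⟩ t

/-- A chain of domino tiles: a nonempty finite sequence of oriented tiles
`(a₁,b₁),…,(aₙ,bₙ)` whose underlying unordered tiles are pairwise distinct and
which satisfies `bᵢ = aᵢ₊₁` for all `1 ≤ i < n`. -/
structure DChain where
  tiles : List (Fin 7 × Fin 7)
  ne : tiles ≠ []
  nodup : (tiles.map fun p => Sym2.mk p.1 p.2).Nodup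
  linked : tiles.Chain' fun p q => p.2 = q.1

/-- The left end `a₁` of a chain. -/
def DChain.left (C : DChain) : Fin 7 := (C.tiles.head C.ne).1

/-- The right end `bₙ` of a chain. -/
def DChain.right (C : DChain) : Fin 7 := (C.tiles.getLast C.ne).2

/-- The `2n` entries `a₁,b₁,a₂,b₂,…,aₙ,bₙ` of a chain. -/
def DChain.entries (C : DChain) : List (Fin 7) := C.tiles.flatMap fun p => [p.1, p.2]

/-- The underlying (unordered) tiles of a chain. -/
def DChain.tileList (C : DChain) : List Tile := C.tiles.map fun p => Sym2.mk p.1 p.2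

/-- The total pip sum of a chain. -/
def DChain.pipsSum (C : DChain) : ℕ := (C.tiles.map fun p => (p.1 : ℕ) + (p.2 : ℕ)).sum

/-- A chain is blocked if no domino tile outside the chain contains its left end,
and no domino tile outside the chain contains its right end. -/
def DChain.Blocked (C : DChain) : Prop :=
  ∀ t : Tile, t ∉ C.tileList → C.left ∉ t ∧ C.right ∉ t

open Finset

theorem List.count_flatMap_pair_of_isChain {α : Type*} [DecidableEq α] (v : α) :
    ∀ (p : α × α) (l : List (α × α)), (p :: l).IsChain (fun p q => p.2 = q.1) →
      ((p :: l).flatMap fun q => [q.1, q.2]).count v =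
        [p.1, ((p :: l).getLast (cons_ne_nil p l)).2].count v + 2 * (l.map Prod.fst).count v
  | p, [], _ => by simp
  | p, q :: l, hchain => by
    obtain ⟨hpq, hchain⟩ := isChain_cons_cons.mp hchain
    have ih := count_flatMap_pair_of_isChain v q l hchain
    simp only [flatMap_cons, getLast_cons_cons, map_cons, count_cons, count_append,
      count_nil] at ih ⊢
    rw [ih, hpq]
    omega

theorem List.sum_map_val_eq_sum_count {n : ℕ} (E : List (Fin n)) :
    (E.map Fin.val).sum = ∑ v, E.count v * (v : ℕ) := by
  rw [Finset.sum_list_map_count]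
  refine Finset.sum_subset (subset_univ _) fun v _ hv => ?_
  rw [List.count_eq_zero_of_not_mem (mt List.mem_toFinset.2 hv), zero_smul]

theorem Sym2.sum_count_toMultiset_mk_left {α : Type*} [Fintype α] [DecidableEq α] (k : α) :
    ∑ j, s(k, j).toMultiset.count k = Fintype.card α + 1 := by
  simp [Sym2.toMultiset, List.count_cons, sum_add_distrib, add_comm]

namespace DChain

theorem pipsSum_eq_sum_count (C : DChain) :
    C.pipsSum = ∑ v, C.entries.count v * (v : ℕ) := by
  rw [← List.sum_map_val_eq_sum_count]
  simp [pipsSum, entries, List.flatMap_def, List.sum_flatten, Function.comp_def]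

theorem count_entries_eq_sum_tileList (C : DChain) (v : Fin 7) :
    C.entries.count v = (C.tileList.map fun t => t.toMultiset.count v).sum := by
  simp [entries, tileList, List.count_flatMap, Sym2.toMultiset, Function.comp_def]

theorem mem_entries_of_mem_tileList {C : DChain} {t : Tile} {v : Fin 7}
    (ht : t ∈ C.tileList) (hv : v ∈ t) : v ∈ C.entries := by
  obtain ⟨p, hp, rfl⟩ := List.mem_map.mp ht
  exact List.mem_flatMap.mpr ⟨p, hp, by simpa using hv⟩

theorem even_count_entries (C : DChain) {v : Fin 7} (hl : C.left ≠ v) (hr : C.right ≠ v) :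
    Even (C.entries.count v) := by
  match C, hl, hr with
  | ⟨p :: l, hne, _, hchain⟩, (hl : p.1 ≠ v), (hr : ((p :: l).getLast hne).2 ≠ v) =>
    rw [entries, List.count_flatMap_pair_of_isChain v p l hchain]
    simp [hl, hr]

theorem Blocked.mk_left_mem_tileList {C : DChain} (h : C.Blocked) (j : Fin 7) :
    s(C.left, j) ∈ C.tileList := by
  by_contra hj
  exact (h _ hj).1 (Sym2.mem_mk_left _ _)

theorem eight_le_count_entries {C : DChain} {k : Fin 7} (hk : ∀ j, s(k, j) ∈ C.tileList) :
    8 ≤ C.entries.count k :=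
  calc 8 = ∑ j, s(k, j).toMultiset.count k := (Sym2.sum_count_toMultiset_mk_left k).symm
    _ = ∑ t ∈ univ.image (fun j => s(k, j)), t.toMultiset.count k :=
      (sum_image (f := fun t => t.toMultiset.count k) fun _ _ _ _ => Sym2.congr_right.mp).symm
    _ ≤ ∑ t ∈ C.tileList.toFinset, t.toMultiset.count k :=
      sum_le_sum_of_subset (by simpa [Finset.subset_iff] using hk)
    _ = C.entries.count k :=
      (List.sum_toFinset _ C.nodup).trans (C.count_entries_eq_sum_tileList k).symm

end DChain

theorem blocked_pipsSum_ge (C : DChain) (k : Fin 7) (h : C.Blocked)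
    (hl : C.left = k) (hr : C.right = k) :
    6 * (k : ℕ) + 42 ≤ C.pipsSum := by
  have hmem : ∀ j, s(k, j) ∈ C.tileList := hl ▸ h.mk_left_mem_tileList
  have hcount : ∀ v, (if v = k then 8 else 2) ≤ C.entries.count v := by
    intro v
    split_ifs with hv
    · exact hv ▸ DChain.eight_le_count_entries hmem
    · obtain ⟨m, hm⟩ := C.even_count_entries (hl ▸ Ne.symm hv) (hr ▸ Ne.symm hv)
      have hpos := List.count_pos_iff.2
        (DChain.mem_entries_of_mem_tileList (hmem v) (Sym2.mem_mk_right k v))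
      omega
  have hweights :
      ∀ j : Fin 7, 6 * (j : ℕ) + 42 = ∑ v : Fin 7, (if v = j then 8 else 2) * (v : ℕ) := by
    decide
  calc 6 * (k : ℕ) + 42 = ∑ v : Fin 7, (if v = k then 8 else 2) * (v : ℕ) := hweights k
    _ ≤ ∑ v : Fin 7, C.entries.count v * (v : ℕ) := by gcongr with v; exact hcount v
    _ = C.pipsSum := C.pipsSum_eq_sum_count.symm
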